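/- Let $(X_i, Y_i)$, $i=1,\ldots,n+1$, be i.i.d. with $X_{n+1}$ the test point, let $w:\mathbb{R}^p\to[0,\infty)$ be a fixed weight function, and suppose the test pair $(\tilde X,\tilde Y)$ is drawn (independently of $(X_1,Y_1),\ldots,(X_n,Y_n)$) from the tilted distribution $d\tilde{\mathcal{P}}(x,y)\propto w(x)\, d\mathcal{P}_{XY}(x,y)$. Let $V$ be a fixed score function, $V_i=V(X_i,Y_i)$, and define $p_i = \frac{w(X_i)}{\sum_{j=1}^n w(X_j)+w(\tilde X)}$ for $i\le n$ and $p_{n+1}=\frac{w(\tilde X)}{\sum_{j=1}^n w(X_j)+w(\tilde X)}$. Then $\mathbb{P}\big(V(\tilde X,\tilde Y) \le Q(\alpha; \textstyle\sum_{i=1}^n p_i\delta_{V_i} + p_{n+1}\delta_\infty)\big) \ge \alpha.$ -/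

import Mathlib

/-!
Let `π = Pⁿ⁺¹`. Tilting the last coordinate turns `π` into the joint law of calibration and test
points, which is `π.withDensity (x ↦ w(x_{n+1}) / c)`. The weighted quantile `Q` computed from all
`n + 1` scores is a symmetric function of the sample, so under `π` the `n + 1` quantities
`1{V_i ≤ Q} w(x_i)` all have the same integral. By the definition of the quantile,
`∑ i, 1{V_i ≤ Q} w(x_i) ≥ α ∑ i, w(x_i)` pointwise, and averaging over `i` gives
`P(V_{n+1} ≤ Q) ≥ α`. Replacing the test score inside the quantile by `+∞` only raises `Q`.
-/

open Finset MeasureTheory ProbabilityTheory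
open scoped ENNReal

noncomputable def equantile {m : ℕ} (w : Fin m → ℝ) (V : Fin m → EReal) (α : ℝ) : EReal :=
  sInf {t : EReal | α ≤ ∑ i, if V i ≤ t then w i else 0}

section equantile

variable {m : ℕ} {q : Fin m → ℝ} {V : Fin m → EReal} {α : ℝ}

lemma sum_ite_le_sum_ite_of_imp (hq : 0 ≤ q) {V' : Fin m → EReal} {t t' : EReal}
    (h : ∀ i, V i ≤ t → V' i ≤ t') :
    ∑ i, (if V i ≤ t then q i else 0) ≤ ∑ i, if V' i ≤ t' then q i else 0 :=
  sum_le_sum fun i _ => by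
    split_ifs with ht ht' <;> first | exact le_rfl | exact hq i | exact absurd (h i ht) ht'

lemma equantile_mono_right (hq : 0 ≤ q) {V' : Fin m → EReal} (hV : V ≤ V') :
    equantile q V α ≤ equantile q V' α :=
  sInf_le_sInf fun _ ht => ht.trans (sum_ite_le_sum_ite_of_imp hq fun i h => (hV i).trans h)

lemma equantile_comp_perm (σ : Equiv.Perm (Fin m)) :
    equantile (q ∘ σ) (V ∘ σ) α = equantile q V α := by
  simp only [equantile, Function.comp_apply]
  congr! 4 with t
  exact Equiv.sum_comp σ fun i => if V i ≤ t then q i else 0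

lemma equantile_eq_iInf_finset (hq : 0 ≤ q) :
    equantile q V α = ⨅ T : Finset (Fin m),
      if α ≤ ∑ i, (if V i ≤ T.sup V then q i else 0) then T.sup V else ⊤ := by
  refine le_antisymm (le_iInf fun T => ?_) (le_sInf fun u hu => ?_)
  · split_ifs with h
    exacts [sInf_le h, le_top]
  · set T := univ.filter (V · ≤ u)
    have hTu : T.sup V ≤ u := Finset.sup_le fun i hi => (mem_filter.1 hi).2
    have hT : α ≤ ∑ i, if V i ≤ T.sup V then q i else 0 :=
      hu.trans (sum_ite_le_sum_ite_of_imp hq fun i hi => le_sup (mem_filter.2 ⟨mem_univ i, hi⟩))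
    exact (iInf_le _ T).trans (by rw [if_pos hT]; exact hTu)

lemma le_sum_ite_le_equantile (hq : 0 ≤ q) (hα : α ≤ ∑ i, q i) :
    α ≤ ∑ i, if V i ≤ equantile q V α then q i else 0 := by
  obtain ⟨T, hT⟩ := exists_eq_ciInf_of_finite (f := fun T : Finset (Fin m) =>
    if α ≤ ∑ i, (if V i ≤ T.sup V then q i else 0) then T.sup V else ⊤)
  rw [equantile_eq_iInf_finset hq, ← hT]
  split_ifs with h
  · exact h
  · simpa using hα

lemma mul_sum_le_sum_ite_le_equantile {u : Fin m → ℝ} (hu : 0 ≤ u) (hα : α ≤ 1) :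
    α * ∑ i, u i ≤ ∑ i, if V i ≤ equantile (fun i => u i / ∑ j, u j) V α then u i else 0 := by
  set S := ∑ j, u j
  rcases (sum_nonneg fun i _ => hu i : 0 ≤ S).eq_or_lt with hS | hS
  · have hu0 : ∀ i, u i = 0 := fun i =>
      (sum_eq_zero_iff_of_nonneg fun i _ => hu i).1 hS.symm i (mem_univ i)
    simp [S, hu0]
  · have hq : α ≤ ∑ i, u i / S := by rwa [← sum_div, div_self hS.ne']
    have := mul_le_mul_of_nonneg_right
      (le_sum_ite_le_equantile (V := V) (fun i => div_nonneg (hu i) hS.le) hq) hS.le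
    simpa [sum_mul, ite_mul, div_mul_cancel₀ _ hS.ne'] using this

lemma measurable_equantile {X : Type*} [MeasurableSpace X] {q : X → Fin m → ℝ}
    {V : X → Fin m → EReal} (hq : ∀ x, 0 ≤ q x) (hqm : Measurable q) (hVm : Measurable V) :
    Measurable fun x => equantile (q x) (V x) α := by
  simp only [equantile_eq_iInf_finset (hq _)]
  refine Measurable.iInf fun T => ?_
  have hsup : Measurable fun x => T.sup (V x) := by
    simp only [Finset.sup_eq_iSup]
    fun_prop
  refine Measurable.ite (measurableSet_le measurable_const ?_) hsup measurable_const
  exact Finset.measurable_sum _ fun i _ =>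
    Measurable.ite (measurableSet_le (by fun_prop) hsup) (by fun_prop) measurable_const

end equantile

section

variable {E : Type*}

section conformalQuantile

variable {w s : E → ℝ} {α : ℝ}

noncomputable def conformalQuantile (w s : E → ℝ) (α : ℝ) {m : ℕ} (x : Fin m → E) : EReal :=
  equantile (fun i => w (x i) / ∑ j, w (x j)) (fun i => (s (x i) : EReal)) α

lemma conformalQuantile_comp_perm {m : ℕ} (σ : Equiv.Perm (Fin m)) (x : Fin m → E) :
    conformalQuantile w s α (x ∘ σ) = conformalQuantile w s α x := by
  simpa only [conformalQuantile, Function.comp_def, Equiv.sum_comp σ fun j => w (x j)] using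
    equantile_comp_perm (q := fun i => w (x i) / ∑ j, w (x j)) (V := fun i => (s (x i) : EReal))
      (α := α) σ

lemma conformalQuantile_snoc_le (hw0 : 0 ≤ w) {n : ℕ} (x : Fin n → E) (y : E) :
    conformalQuantile w s α (Fin.snoc (α := fun _ => E) x y) ≤
      equantile (Fin.snoc (fun i => w (x i) / (∑ j, w (x j) + w y)) (w y / (∑ j, w (x j) + w y)))
        (Fin.snoc (fun i => (s (x i) : EReal)) ⊤) α := by
  have hq : (fun i => w (Fin.snoc (α := fun _ => E) x y i) /
        ∑ j, w (Fin.snoc (α := fun _ => E) x y j)) =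
      Fin.snoc (fun i => w (x i) / (∑ j, w (x j) + w y)) (w y / (∑ j, w (x j) + w y)) := by
    funext i
    induction i using Fin.lastCases <;> simp [Fin.sum_univ_castSucc]
  rw [conformalQuantile, hq]
  refine equantile_mono_right ?_ fun i => ?_
  · have hS : 0 ≤ ∑ j, w (x j) + w y := add_nonneg (sum_nonneg fun j _ => hw0 _) (hw0 y)
    intro i
    induction i using Fin.lastCases <;> simp only [Fin.snoc_last, Fin.snoc_castSucc] <;>
      exact div_nonneg (hw0 _) hS
  · induction i using Fin.lastCases <;> simp

lemma ofReal_mul_sum_le_sum_ite_le_conformalQuantile (hw0 : 0 ≤ w) (hα : α ≤ 1) {m : ℕ}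
    (x : Fin m → E) :
    ENNReal.ofReal α * ∑ i, ENNReal.ofReal (w (x i)) ≤
      ∑ i, if (s (x i) : EReal) ≤ conformalQuantile w s α x then ENNReal.ofReal (w (x i))
        else 0 := by
  have h := mul_sum_le_sum_ite_le_equantile (u := fun i => w (x i)) (fun i => hw0 _)
    (V := fun i => (s (x i) : EReal)) hα
  calc ENNReal.ofReal α * ∑ i, ENNReal.ofReal (w (x i)) = ENNReal.ofReal (α * ∑ i, w (x i)) := by
        rw [ENNReal.ofReal_mul' (sum_nonneg fun i _ => hw0 _),
          ENNReal.ofReal_sum_of_nonneg fun i _ => hw0 _]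
    _ ≤ ENNReal.ofReal (∑ i,
          if (s (x i) : EReal) ≤ conformalQuantile w s α x then w (x i) else 0) :=
        ENNReal.ofReal_le_ofReal h
    _ = _ := by
        rw [ENNReal.ofReal_sum_of_nonneg fun i _ => by split_ifs; exacts [hw0 _, le_rfl]]
        simp only [apply_ite ENNReal.ofReal, ENNReal.ofReal_zero]

variable [MeasurableSpace E]

lemma measurable_conformalQuantile {m : ℕ} (hw : Measurable w) (hw0 : 0 ≤ w)
    (hs : Measurable s) : Measurable (conformalQuantile (m := m) w s α) :=
  measurable_equantile (fun x i => div_nonneg (hw0 _) (sum_nonneg fun j _ => hw0 _))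
    (by fun_prop) (by fun_prop)

end conformalQuantile

variable [MeasurableSpace E]

section snoc

variable {n : ℕ}

section

variable (μ : Fin n → Measure E) [∀ i, SigmaFinite (μ i)] (ν : Measure E) [SigmaFinite ν]

instance MeasureTheory.sigmaFinite_snoc (i : Fin (n + 1)) :
    SigmaFinite (Fin.snoc (α := fun _ => Measure E) μ ν i) := by
  induction i using Fin.lastCases <;> simp only [Fin.snoc_last, Fin.snoc_castSucc] <;>
    infer_instance

lemma MeasurableEquiv.map_withDensity {F : Type*} [MeasurableSpace F] (e : E ≃ᵐ F)
    (μ : Measure E) (f : E → ℝ≥0∞) :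
    (μ.withDensity f).map e = (μ.map e).withDensity (f ∘ e.symm) := by
  ext s hs
  rw [Measure.map_apply e.measurable hs, withDensity_apply _ (e.measurable hs),
    withDensity_apply _ hs, e.restrict_map, lintegral_map_equiv]
  simp

lemma MeasureTheory.Measure.pi_snoc_eq_map :
    Measure.pi (Fin.snoc (α := fun _ => Measure E) μ ν) =
      (ν.prod (Measure.pi μ)).map
        (MeasurableEquiv.piFinSuccAbove (fun _ => E) (Fin.last n)).symm := by
  simpa using
    (measurePreserving_piFinSuccAbove (Fin.snoc (α := fun _ => Measure E) μ ν) (Fin.last n)).symm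
      |>.map_eq.symm

lemma MeasureTheory.Measure.pi_snoc_withDensity {ρ : E → ℝ≥0∞} (hρ : Measurable ρ)
    [SigmaFinite (ν.withDensity ρ)] :
    Measure.pi (Fin.snoc (α := fun _ => Measure E) μ (ν.withDensity ρ)) =
      (Measure.pi (Fin.snoc (α := fun _ => Measure E) μ ν)).withDensity
        fun x => ρ (x (Fin.last n)) := by
  rw [pi_snoc_eq_map, pi_snoc_eq_map, prod_withDensity_left hρ, MeasurableEquiv.map_withDensity]
  rfl

end

lemma MeasureTheory.Measure.pi_snoc_smul_withDensity (P : Measure E) [SigmaFinite P]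
    {ρ : E → ℝ≥0∞} (hρ : Measurable ρ) (r : ℝ≥0∞) [SigmaFinite (r • P.withDensity ρ)] :
    Measure.pi (Fin.snoc (α := fun _ => Measure E) (fun _ : Fin n => P) (r • P.withDensity ρ)) =
      (Measure.pi fun _ => P).withDensity fun x => r * ρ (x (Fin.last n)) := by
  have : SigmaFinite (P.withDensity (r • ρ)) := by rwa [withDensity_smul r hρ]
  rw [← withDensity_smul r hρ, pi_snoc_withDensity _ _ (hρ.const_smul r)]
  congr 2
  funext i
  induction i using Fin.lastCases <;> simp

end snoc

section exchangeable

variable {m : ℕ} (P : Measure E) [SigmaFinite P] {Φ : E → (Fin m → E) → ℝ≥0∞}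

lemma lintegral_pi_comp_perm (σ : Equiv.Perm (Fin m)) {F : (Fin m → E) → ℝ≥0∞}
    (hF : Measurable F) :
    ∫⁻ x, F (x ∘ σ) ∂Measure.pi (fun _ => P) = ∫⁻ x, F x ∂Measure.pi (fun _ => P) :=
  ((measurePreserving_piCongrLeft (fun _ => P) σ).symm _).lintegral_comp hF

lemma lintegral_pi_eval_eq_of_perm_invariant
    (hΦ : ∀ a x (σ : Equiv.Perm (Fin m)), Φ a (x ∘ σ) = Φ a x)
    {j : Fin m} (hΦj : Measurable fun x => Φ (x j) x) (i : Fin m) :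
    ∫⁻ x, Φ (x i) x ∂Measure.pi (fun _ => P) = ∫⁻ x, Φ (x j) x ∂Measure.pi (fun _ => P) := by
  rw [← lintegral_pi_comp_perm P (Equiv.swap i j) hΦj]
  simp [hΦ]

lemma lintegral_sum_pi_eval_of_perm_invariant
    (hΦ : ∀ a x (σ : Equiv.Perm (Fin m)), Φ a (x ∘ σ) = Φ a x)
    (hΦm : ∀ i, Measurable fun x => Φ (x i) x) (j : Fin m) :
    ∫⁻ x, ∑ i, Φ (x i) x ∂Measure.pi (fun _ => P) =
      m * ∫⁻ x, Φ (x j) x ∂Measure.pi (fun _ => P) := by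
  rw [lintegral_finsetSum _ fun i _ => hΦm i]
  simp [lintegral_pi_eval_eq_of_perm_invariant P hΦ (hΦm j)]

lemma const_mul_lintegral_pi_eval_le {Ψ : E → (Fin m → E) → ℝ≥0∞} (a : ℝ≥0∞)
    (hΨ : ∀ b x (σ : Equiv.Perm (Fin m)), Ψ b (x ∘ σ) = Ψ b x)
    (hΦ : ∀ b x (σ : Equiv.Perm (Fin m)), Φ b (x ∘ σ) = Φ b x)
    (hΨm : ∀ i, Measurable fun x => Ψ (x i) x) (hΦm : ∀ i, Measurable fun x => Φ (x i) x)
    (h : ∀ x, a * ∑ i, Ψ (x i) x ≤ ∑ i, Φ (x i) x) (j : Fin m) :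
    a * ∫⁻ x, Ψ (x j) x ∂Measure.pi (fun _ => P) ≤ ∫⁻ x, Φ (x j) x ∂Measure.pi (fun _ => P) := by
  have hm : (m : ℝ≥0∞) ≠ 0 := Nat.cast_ne_zero.2 j.pos.ne'
  refine (ENNReal.mul_le_mul_iff_right hm (ENNReal.natCast_ne_top m)).1 ?_
  calc _ = a * ∫⁻ x, ∑ i, Ψ (x i) x ∂Measure.pi (fun _ => P) := by
        rw [mul_left_comm, lintegral_sum_pi_eval_of_perm_invariant P hΨ hΨm j]
    _ = ∫⁻ x, a * ∑ i, Ψ (x i) x ∂Measure.pi (fun _ => P) :=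
        (lintegral_const_mul _ (Finset.measurable_sum _ fun i _ => hΨm i)).symm
    _ ≤ ∫⁻ x, ∑ i, Φ (x i) x ∂Measure.pi (fun _ => P) := lintegral_mono h
    _ = _ := lintegral_sum_pi_eval_of_perm_invariant P hΦ hΦm j

end exchangeable

lemma mul_lintegral_eq_one_of_isProbabilityMeasure_smul_withDensity (P : Measure E)
    {ρ : E → ℝ≥0∞} {r : ℝ≥0∞} [IsProbabilityMeasure (r • P.withDensity ρ)] :
    r * ∫⁻ z, ρ z ∂P = 1 := by
  have h := measure_univ (μ := r • P.withDensity ρ)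
  rwa [Measure.smul_apply, withDensity_apply _ MeasurableSet.univ, Measure.restrict_univ,
    smul_eq_mul] at h

theorem weighted_conformal_coverage (P : Measure E) [IsProbabilityMeasure P] {w s : E → ℝ}
    (hw : Measurable w) (hw0 : 0 ≤ w) (hs : Measurable s) {n : ℕ} {r : ℝ≥0∞}
    [IsProbabilityMeasure (r • P.withDensity fun z => ENNReal.ofReal (w z))] {α : ℝ}
    (hα : α ≤ 1) :
    ENNReal.ofReal α ≤ Measure.pi (Fin.snoc (α := fun _ => Measure E) (fun _ : Fin n => P)
        (r • P.withDensity fun z => ENNReal.ofReal (w z)))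
      {x | (s (x (Fin.last n)) : EReal) ≤ conformalQuantile w s α x} := by
  set ρ : E → ℝ≥0∞ := fun z => ENNReal.ofReal (w z)
  set π := Measure.pi fun _ : Fin (n + 1) => P
  set Q := conformalQuantile (m := n + 1) w s α
  set Φ : E → (Fin (n + 1) → E) → ℝ≥0∞ := fun a x => if (s a : EReal) ≤ Q x then ρ a else 0
  have hρ : Measurable ρ := hw.ennreal_ofReal
  have hQ : Measurable Q := measurable_conformalQuantile hw hw0 hs
  have hA : MeasurableSet {x : Fin (n + 1) → E | (s (x (Fin.last n)) : EReal) ≤ Q x} :=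
    measurableSet_le (by fun_prop) hQ
  have hΦ : ∀ a x (σ : Equiv.Perm (Fin (n + 1))), Φ a (x ∘ σ) = Φ a x := fun a x σ => by
    simp only [Φ, Q, conformalQuantile_comp_perm]
  have hΦm : ∀ i, Measurable fun x => Φ (x i) x := fun i =>
    Measurable.ite (measurableSet_le (by fun_prop) hQ) (by fun_prop) measurable_const
  have hmass : r * ∫⁻ x, ρ (x (Fin.last n)) ∂π = 1 := by
    rw [(measurePreserving_eval (fun _ => P) (Fin.last n)).lintegral_comp hρ]
    exact mul_lintegral_eq_one_of_isProbabilityMeasure_smul_withDensity P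
  have hlast : ENNReal.ofReal α * ∫⁻ x, ρ (x (Fin.last n)) ∂π ≤
      ∫⁻ x, Φ (x (Fin.last n)) x ∂π :=
    const_mul_lintegral_pi_eval_le P (Ψ := fun a _ => ρ a) _ (fun _ _ _ => rfl) hΦ
      (fun i => by fun_prop) hΦm (ofReal_mul_sum_le_sum_ite_le_conformalQuantile hw0 hα) _
  calc ENNReal.ofReal α = r * (ENNReal.ofReal α * ∫⁻ x, ρ (x (Fin.last n)) ∂π) := by
        rw [mul_left_comm, hmass, mul_one]
    _ ≤ r * ∫⁻ x, Φ (x (Fin.last n)) x ∂π := by gcongr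
    _ = _ := by
        rw [Measure.pi_snoc_smul_withDensity P hρ r, withDensity_apply _ hA,
          lintegral_const_mul _ (by fun_prop), ← lintegral_indicator hA]
        congr 1
        refine lintegral_congr fun x => ?_
        simp [Set.indicator_apply, Φ]

end

section

variable {Ω β : Type*} [MeasurableSpace Ω] [MeasurableSpace β] {μ : Measure Ω} {n : ℕ}
  {Z : Fin n → Ω → β} {Zt : Ω → β}

lemma measurable_fin_snoc (hZ : ∀ i, Measurable (Z i)) (hZt : Measurable Zt) :
    Measurable fun ω => Fin.snoc (α := fun _ => β) (fun i => Z i ω) (Zt ω) :=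
  measurable_pi_lambda _ fun i => by
    induction i using Fin.lastCases with
    | last => simpa using hZt
    | cast i => simpa using hZ i

lemma ProbabilityTheory.iIndepFun.map_snoc_eq_pi (hZ : ∀ i, Measurable (Z i))
    (hZt : Measurable Zt) (h : iIndepFun (Fin.snoc (α := fun _ => Ω → β) Z Zt) μ) :
    μ.map (fun ω => Fin.snoc (α := fun _ => β) (fun i => Z i ω) (Zt ω)) =
      Measure.pi (Fin.snoc (α := fun _ => Measure β) (fun i => μ.map (Z i)) (μ.map Zt)) := by
  have hsnoc : (fun ω => Fin.snoc (α := fun _ => β) (fun i => Z i ω) (Zt ω)) =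
      fun ω i => Fin.snoc (α := fun _ => Ω → β) Z Zt i ω :=
    funext fun ω => funext fun i => by induction i using Fin.lastCases <;> simp
  rw [hsnoc, h.map_fun_eq_pi_map fun i => ?_]
  · congr 1
    funext i
    induction i using Fin.lastCases <;> simp
  · induction i using Fin.lastCases with
    | last => simpa using hZt.aemeasurable
    | cast i => simpa using (hZ i).aemeasurable

end

theorem stmt17_general {Ω : Type*} [MeasurableSpace Ω] (μ : Measure Ω) [IsProbabilityMeasure μ]
    (p n : ℕ) (P : Measure ((Fin p → ℝ) × ℝ)) [IsProbabilityMeasure P]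
    (w : (Fin p → ℝ) → ℝ) (hwmeas : Measurable w) (hwpos : ∀ x, 0 ≤ w x)
    (c : ℝ)
    (VS : ((Fin p → ℝ) × ℝ) → ℝ) (hVS : Measurable VS)
    (Z : Fin n → Ω → ((Fin p → ℝ) × ℝ)) (Zt : Ω → ((Fin p → ℝ) × ℝ))
    (hZmeas : ∀ i, Measurable (Z i)) (hZtmeas : Measurable Zt)
    (hindep : iIndepFun (Fin.snoc (α := fun _ => Ω → (Fin p → ℝ) × ℝ) Z Zt) μ)
    (hZlaw : ∀ i, Measure.map (Z i) μ = P)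
    (hZtlaw : Measure.map Zt μ =
      (ENNReal.ofReal c)⁻¹ • (P.withDensity fun z => ENNReal.ofReal (w z.1)))
    (α : ℝ) (hα : α ∈ Set.Ioo (0 : ℝ) 1) :
    ENNReal.ofReal α ≤
      μ {ω | (VS (Zt ω) : EReal) ≤
        equantile
          (Fin.snoc
            (fun i : Fin n => w (Z i ω).1 / (∑ j, w (Z j ω).1 + w (Zt ω).1))
            (w (Zt ω).1 / (∑ j, w (Z j ω).1 + w (Zt ω).1)))
          (Fin.snoc (fun i : Fin n => ((VS (Z i ω) : ℝ) : EReal)) (⊤ : EReal)) α} := by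
  have hw : Measurable fun z : (Fin p → ℝ) × ℝ => w z.1 := hwmeas.comp measurable_fst
  have hw0 : 0 ≤ fun z : (Fin p → ℝ) × ℝ => w z.1 := fun z => hwpos z.1
  have : IsProbabilityMeasure
      ((ENNReal.ofReal c)⁻¹ • P.withDensity fun z => ENNReal.ofReal (w z.1)) :=
    hZtlaw ▸ Measure.isProbabilityMeasure_map hZtmeas.aemeasurable
  have hlaw := hindep.map_snoc_eq_pi hZmeas hZtmeas
  simp only [hZlaw, hZtlaw] at hlaw
  have hA : MeasurableSet {x : Fin (n + 1) → (Fin p → ℝ) × ℝ |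
      (VS (x (Fin.last n)) : EReal) ≤ conformalQuantile (fun z => w z.1) VS α x} :=
    measurableSet_le (by fun_prop) (measurable_conformalQuantile hw hw0 hVS)
  have hcov :=
    weighted_conformal_coverage P hw hw0 hVS (n := n) (r := (ENNReal.ofReal c)⁻¹) hα.2.le
  rw [← hlaw, Measure.map_apply (measurable_fin_snoc hZmeas hZtmeas) hA] at hcov
  refine hcov.trans (measure_mono fun ω hω => ?_)
  simp only [Set.mem_preimage, Set.mem_ofPred_eq, Fin.snoc_last] at hω
  exact hω.trans (conformalQuantile_snoc_le (s := VS) hw0 (fun i => Z i ω) (Zt ω))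

/-- Weighted conformal prediction under covariate shift (Proposition B.1, Tibshirani et al.):
with `n` i.i.d. calibration pairs from `P`, a test pair drawn independently from the tilted
distribution `d𝒫̃ ∝ w(x) dP`, and likelihood-ratio weights, the weighted conformal quantile
covers the test score with probability at least `α`. -/
theorem stmt17 {Ω : Type*} [MeasurableSpace Ω] (μ : Measure Ω) [IsProbabilityMeasure μ]
    (p n : ℕ) (P : Measure ((Fin p → ℝ) × ℝ)) [IsProbabilityMeasure P]
    (w : (Fin p → ℝ) → ℝ) (hwmeas : Measurable w) (hwpos : ∀ x, 0 ≤ w x)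
    (c : ℝ) (hc : 0 < c) (hcint : c = ∫ z, w z.1 ∂P)
    (VS : ((Fin p → ℝ) × ℝ) → ℝ) (hVS : Measurable VS)
    (Z : Fin n → Ω → ((Fin p → ℝ) × ℝ)) (Zt : Ω → ((Fin p → ℝ) × ℝ))
    (hZmeas : ∀ i, Measurable (Z i)) (hZtmeas : Measurable Zt)
    (hindep : iIndepFun (Fin.snoc (α := fun _ => Ω → (Fin p → ℝ) × ℝ) Z Zt) μ)
    (hZlaw : ∀ i, Measure.map (Z i) μ = P)
    (hZtlaw : Measure.map Zt μ =
      (ENNReal.ofReal c)⁻¹ • (P.withDensity fun z => ENNReal.ofReal (w z.1)))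
    (α : ℝ) (hα : α ∈ Set.Ioo (0 : ℝ) 1) :
    ENNReal.ofReal α ≤
      μ {ω | (VS (Zt ω) : EReal) ≤
        equantile
          (Fin.snoc
            (fun i : Fin n => w (Z i ω).1 / (∑ j, w (Z j ω).1 + w (Zt ω).1))
            (w (Zt ω).1 / (∑ j, w (Z j ω).1 + w (Zt ω).1)))
          (Fin.snoc (fun i : Fin n => ((VS (Z i ω) : ℝ) : EReal)) (⊤ : EReal)) α} :=
  stmt17_general μ p n P w hwmeas hwpos c VS hVS Z Zt hZmeas hZtmeas hindep hZlaw hZtlaw α hα
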